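/- Let p^(1),…,p^(N) ∈ ℝ^d be vectors with nonnegative entries all having the same total sum, let Ω_0 = 0, Ω_k = max over n of the sum of the k largest entries of p^(n) for k = 1,…,d, and let ω^sup ∈ ℝ^d have entries ω^sup_k = Ω_k − Ω_{k−1}. If the entries of ω^sup are in descending order (ω^sup_1 ≥ ω^sup_2 ≥ … ≥ ω^sup_d), then for every vector r with nonnegative entries that majorizes each p^(n), the vector ω^sup is majorized by r; that is, ω^sup is the least upper bound of {p^(1),…,p^(N)} in the majorization order. -/

import Mathlib

open Matrix
open scoped Kronecker ComplexOrder

noncomputable section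

/-- Sum of the `k` largest entries of `v` (zero-padding implicit for nonneg vectors):
the maximum of `∑ i ∈ s, v i` over subsets `s` of cardinality at most `k`. -/
def topSum {ι : Type*} [Fintype ι] (v : ι → ℝ) (k : ℕ) : ℝ :=
  (Finset.univ.powerset.filter fun s => s.card ≤ k).sup' ⟨∅, by simp⟩ fun s => ∑ i ∈ s, v i

/-- `v ≺ w` (majorization, with implicit zero padding): every partial sum of the `k` largest
entries of `v` is at most that of `w`, and the total sums are equal. -/
def Majorizes {ι κ : Type*} [Fintype ι] [Fintype κ] (v : ι → ℝ) (w : κ → ℝ) : Prop :=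
  (∀ k : ℕ, topSum v k ≤ topSum w k) ∧ (∑ i, v i = ∑ j, w j)

/-- The operator norm (largest singular value) of a complex matrix. -/
def opNorm {m n : Type*} [Fintype m] [Fintype n] [DecidableEq n] (M : Matrix m n ℂ) : ℝ :=
  ‖LinearMap.toContinuousLinearMap (Matrix.toEuclideanLin M)‖

/-- `sCoef U k = s_k`: the maximum operator norm over all submatrices of `U` of class `k`,
i.e. obtained by selecting nonempty row/column sets `R`, `C` with `|R| + |C| = k + 1`. -/
def sCoef {d : ℕ} (U : Matrix (Fin d) (Fin d) ℂ) (k : ℕ) : ℝ :=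
  sSup { r : ℝ | ∃ R C : Finset (Fin d), R.Nonempty ∧ C.Nonempty ∧ R.card + C.card = k + 1 ∧
    r = opNorm (U.submatrix (fun i : {i // i ∈ R} => (i : Fin d))
                            (fun j : {j // j ∈ C} => (j : Fin d))) }

/-- The bound vector `ω^{X⊕Z} = (1, s_1, s_2 - s_1, …, s_d - s_{d-1}, 0, …, 0) ∈ ℝ^{2d}`.
(Note `sCoef U 0 = sSup ∅ = 0`, so the entry at index `1` is `s_1`.) -/
def omegaDS {d : ℕ} (U : Matrix (Fin d) (Fin d) ℂ) : Fin (2 * d) → ℝ := fun i =>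
  if (i : ℕ) = 0 then 1
  else if (i : ℕ) ≤ d then sCoef U (i : ℕ) - sCoef U ((i : ℕ) - 1)
  else 0

/-- A density matrix: positive semidefinite with unit trace. -/
def IsDensityMatrix {n : Type*} [Fintype n] (ρ : Matrix n n ℂ) : Prop :=
  ρ.PosSemidef ∧ ρ.trace = 1

/-- A family of vectors forming an orthonormal basis of `ℂ^d` (w.r.t. `⟨u, v⟩ = star u ⬝ᵥ v`). -/
def OrthonormalBasisVecs {d : ℕ} (x : Fin d → Fin d → ℂ) : Prop :=
  ∀ i j, star (x i) ⬝ᵥ x j = if i = j then 1 else 0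

/-- Measurement distribution of a density matrix `ρ` in the basis `x`: `p i = ⟨x i, ρ (x i)⟩`. -/
def measDist {d : ℕ} (x : Fin d → Fin d → ℂ) (ρ : Matrix (Fin d) (Fin d) ℂ) : Fin d → ℝ :=
  fun i => (star (x i) ⬝ᵥ (ρ *ᵥ x i)).re

/-- The tensor product of vectors. -/
def tensorVec {dA dB : ℕ} (u : Fin dA → ℂ) (v : Fin dB → ℂ) : Fin dA × Fin dB → ℂ :=
  fun ab => u ab.1 * v ab.2

/-- Joint measurement distribution of a bipartite density matrix `ρ` in the product basis
`{xA i ⊗ xB j}`: `p (i,j) = ⟨xA i ⊗ xB j, ρ (xA i ⊗ xB j)⟩`. -/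
def jointDist {dA dB : ℕ} (xA : Fin dA → Fin dA → ℂ) (xB : Fin dB → Fin dB → ℂ)
    (ρ : Matrix (Fin dA × Fin dB) (Fin dA × Fin dB) ℂ) : Fin dA × Fin dB → ℝ :=
  fun ij => (star (tensorVec (xA ij.1) (xB ij.2)) ⬝ᵥ (ρ *ᵥ tensorVec (xA ij.1) (xB ij.2))).re

open scoped Classical in
/-- The finite set of distinct values of the products `α i * β j`. -/
def valueSet {dA dB : ℕ} (α : Fin dA → ℝ) (β : Fin dB → ℝ) : Finset ℝ :=
  Finset.image (fun ij : Fin dA × Fin dB => α ij.1 * β ij.2) Finset.univ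

open scoped Classical in
/-- The grouped distribution of a joint distribution `p`, indexed by the distinct values `l`
of the products `α i * β j`, with entries `∑_{(i,j) : α i * β j = l} p (i,j)`. -/
def groupedDist {dA dB : ℕ} (α : Fin dA → ℝ) (β : Fin dB → ℝ)
    (p : Fin dA × Fin dB → ℝ) : valueSet α β → ℝ :=
  fun l => ∑ ij ∈ Finset.univ.filter (fun ij : Fin dA × Fin dB => α ij.1 * β ij.2 = (l : ℝ)), p ij

/-- Separability: `ρ` is a finite convex combination of tensor products of density matrices. -/
def IsSeparableState {dA dB : ℕ} (ρ : Matrix (Fin dA × Fin dB) (Fin dA × Fin dB) ℂ) : Prop :=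
  ∃ (K : ℕ) (lam : Fin K → ℝ) (σ : Fin K → Matrix (Fin dA) (Fin dA) ℂ)
    (τ : Fin K → Matrix (Fin dB) (Fin dB) ℂ),
    (∀ k, 0 ≤ lam k) ∧ (∑ k, lam k = 1) ∧
    (∀ k, IsDensityMatrix (σ k)) ∧ (∀ k, IsDensityMatrix (τ k)) ∧
    ρ = ∑ k, (lam k : ℂ) • (σ k ⊗ₖ τ k)

/-! Since `ω_k = Ω_{k+1} - Ω_k`, the first `m` entries of `ω` sum to `Ω_m`, and as `ω` is
descending no other `m` entries sum to more; hence `topSum ω m ≤ Ω_m = max_n topSum (p n) m ≤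
topSum r m`. The totals agree because `Ω_d` is the common total `c` of the `p n`, which is also
the total of `r`. -/

section TopSum

variable {ι : Type*} [Fintype ι]

theorem sum_le_topSum (v : ι → ℝ) {s : Finset ι} {k : ℕ} (h : s.card ≤ k) :
    ∑ i ∈ s, v i ≤ topSum v k :=
  Finset.le_sup' (f := fun t => ∑ i ∈ t, v i) (by simp [h])

theorem topSum_le_iff {v : ι → ℝ} {k : ℕ} {a : ℝ} :
    topSum v k ≤ a ↔ ∀ s : Finset ι, s.card ≤ k → ∑ i ∈ s, v i ≤ a := by
  simp [topSum, Finset.sup'_le_iff]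

theorem topSum_mono (v : ι → ℝ) : Monotone (topSum v) := fun _ _ hkl =>
  topSum_le_iff.2 fun _ hs => sum_le_topSum v (hs.trans hkl)

@[simp]
theorem topSum_zero (v : ι → ℝ) : topSum v 0 = 0 :=
  le_antisymm (topSum_le_iff.2 fun s hs => by simp [Finset.card_eq_zero.1 (Nat.le_zero.1 hs)])
    (by simpa using sum_le_topSum v (s := ∅) le_rfl)

theorem topSum_of_card_le {v : ι → ℝ} (hv : ∀ i, 0 ≤ v i) {k : ℕ} (h : Fintype.card ι ≤ k) :
    topSum v k = ∑ i, v i :=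
  le_antisymm
    (topSum_le_iff.2 fun s _ =>
      Finset.sum_le_sum_of_subset_of_nonneg s.subset_univ fun i _ _ => hv i)
    (sum_le_topSum v (by simpa using h))

end TopSum

theorem Fin.val_le_val_of_strictMono {m d : ℕ} {f : Fin m → Fin d} (hf : StrictMono f)
    (j : Fin m) : (j : ℕ) ≤ f j := by
  have := Finset.card_le_card_of_injOn f (s := Finset.Iic j) (t := Finset.Iic (f j))
    (fun i hi => by simpa using hf.monotone (by simpa using hi)) hf.injective.injOn
  simpa using this

theorem Antitone.sum_le_sum_castLE {d : ℕ} {ω : Fin d → ℝ} (hω : Antitone ω)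
    (s : Finset (Fin d)) :
    ∑ i ∈ s, ω i ≤ ∑ j : Fin s.card, ω (Fin.castLE (card_finset_fin_le s) j) := by
  set f := s.orderEmbOfFin rfl
  calc ∑ i ∈ s, ω i = ∑ i ∈ Finset.univ.image f, ω i := by rw [s.image_orderEmbOfFin_univ rfl]
    _ = ∑ j, ω (f j) := Finset.sum_image fun _ _ _ _ h => f.injective h
    _ ≤ _ := Finset.sum_le_sum fun j _ =>
        hω (Fin.le_def.2 (Fin.val_le_val_of_strictMono f.strictMono j))

section Increments

variable {d : ℕ} {ω : Fin d → ℝ} {Ω : ℕ → ℝ}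

theorem sum_castLE_eq_of_eq_sub (hω : ∀ k : Fin d, ω k = Ω (k + 1) - Ω k) {m : ℕ}
    (hm : m ≤ d) : ∑ j : Fin m, ω (Fin.castLE hm j) = Ω m - Ω 0 := by
  simp only [hω, Fin.val_castLE]
  exact (Fin.sum_univ_eq_sum_range (fun j => Ω (j + 1) - Ω j) m).trans (Finset.sum_range_sub Ω m)

theorem sum_eq_of_eq_sub (hω : ∀ k : Fin d, ω k = Ω (k + 1) - Ω k) :
    ∑ i, ω i = Ω d - Ω 0 := by
  simpa using sum_castLE_eq_of_eq_sub hω le_rfl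

theorem topSum_le_of_eq_sub (hanti : Antitone ω) (hΩ : Monotone Ω)
    (hω : ∀ k : Fin d, ω k = Ω (k + 1) - Ω k) (k : ℕ) : topSum ω k ≤ Ω k - Ω 0 :=
  topSum_le_iff.2 fun s hs => calc
    ∑ i ∈ s, ω i ≤ ∑ j : Fin s.card, ω (Fin.castLE (card_finset_fin_le s) j) :=
      hanti.sum_le_sum_castLE s
    _ = Ω s.card - Ω 0 := sum_castLE_eq_of_eq_sub hω _
    _ ≤ Ω k - Ω 0 := by gcongr; exact hΩ hs

end Increments

section SupTopSum

variable {ι κ : Type*} [Fintype ι] [Nonempty ι] [Fintype κ]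

/-- `Ω_k = max_n topSum (p n) k`. -/
def supTopSum (p : ι → κ → ℝ) (k : ℕ) : ℝ :=
  Finset.univ.sup' Finset.univ_nonempty fun n => topSum (p n) k

theorem supTopSum_mono (p : ι → κ → ℝ) : Monotone (supTopSum p) := fun _ _ hkl =>
  Finset.sup'_mono_fun fun n _ => topSum_mono (p n) hkl

@[simp]
theorem supTopSum_zero (p : ι → κ → ℝ) : supTopSum p 0 = 0 := by
  simp [supTopSum]

theorem supTopSum_le_topSum {dr : ℕ} {p : ι → κ → ℝ} {r : Fin dr → ℝ}
    (hmaj : ∀ n, Majorizes (p n) r) (k : ℕ) : supTopSum p k ≤ topSum r k :=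
  Finset.sup'_le _ _ fun n _ => (hmaj n).1 k

theorem supTopSum_of_card_le {p : ι → κ → ℝ} (hnn : ∀ n i, 0 ≤ p n i) {c : ℝ}
    (hsum : ∀ n, ∑ i, p n i = c) {k : ℕ} (hk : Fintype.card κ ≤ k) : supTopSum p k = c := by
  simp [supTopSum, topSum_of_card_le (hnn _) hk, hsum]

end SupTopSum

theorem sup_construction_least_upper_bound_general {d N dr : ℕ} (hN : 0 < N)
    (p : Fin N → Fin d → ℝ)
    (hnn : ∀ n i, 0 ≤ p n i) (c : ℝ) (hsum : ∀ n, ∑ i, p n i = c)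
    (ω : Fin d → ℝ)
    (hω : ∀ k : Fin d, ω k =
      Finset.univ.sup' (Finset.univ_nonempty_iff.mpr ⟨⟨0, hN⟩⟩)
        (fun m => topSum (p m) ((k : ℕ) + 1)) -
      Finset.univ.sup' (Finset.univ_nonempty_iff.mpr ⟨⟨0, hN⟩⟩)
        (fun m => topSum (p m) (k : ℕ)))
    (hdesc : ∀ k l : Fin d, k ≤ l → ω l ≤ ω k)
    (r : Fin dr → ℝ)
    (hmaj : ∀ n, Majorizes (p n) r) :
    Majorizes ω r := by
  have : Nonempty (Fin N) := ⟨⟨0, hN⟩⟩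
  have hΩ : ∀ k : Fin d, ω k = supTopSum p (k + 1) - supTopSum p k := hω
  refine ⟨fun k => ?_, ?_⟩
  · calc topSum ω k ≤ supTopSum p k - supTopSum p 0 :=
          topSum_le_of_eq_sub hdesc (supTopSum_mono p) hΩ k
      _ ≤ topSum r k := by simpa using supTopSum_le_topSum hmaj k
  · rw [sum_eq_of_eq_sub hΩ, supTopSum_zero, sub_zero,
      supTopSum_of_card_le hnn hsum (Fintype.card_fin d).le, ← hsum ⟨0, hN⟩, (hmaj ⟨0, hN⟩).2]

/-- if the vector `ω^sup` from the supremum construction is already in descending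
order, then it is a least upper bound: it is majorized by every nonnegative vector `r` that
majorizes all the `p n`. -/
theorem sup_construction_least_upper_bound {d N dr : ℕ} (hN : 0 < N)
    (p : Fin N → Fin d → ℝ)
    (hnn : ∀ n i, 0 ≤ p n i) (c : ℝ) (hsum : ∀ n, ∑ i, p n i = c)
    (ω : Fin d → ℝ)
    (hω : ∀ k : Fin d, ω k =
      Finset.univ.sup' (Finset.univ_nonempty_iff.mpr ⟨⟨0, hN⟩⟩)
        (fun m => topSum (p m) ((k : ℕ) + 1)) -
      Finset.univ.sup' (Finset.univ_nonempty_iff.mpr ⟨⟨0, hN⟩⟩)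
        (fun m => topSum (p m) (k : ℕ)))
    (hdesc : ∀ k l : Fin d, k ≤ l → ω l ≤ ω k)
    (r : Fin dr → ℝ) (hr : ∀ i, 0 ≤ r i)
    (hmaj : ∀ n, Majorizes (p n) r) :
    Majorizes ω r :=
  sup_construction_least_upper_bound_general hN p hnn c hsum ω hω hdesc r hmaj

end
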